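/- arXiv:math/0411277 — 3 statements merged into one kernel-verified Lean document; each statement's English description precedes it below -/
import Mathlib

section
/- Let B be a 2m×2m skew-symmetric matrix and define the α-pfaffian pf^(α)(B) = ∑_{σ∈S_m} α^{m-ν(σ)} ∏_{j=1}^{ν(σ)} P(B)(σ^(j)), where σ = σ^(1)···σ^(ν(σ)) is the cycle decomposition. Then pf^(α)({}^tJ_m B J_m) = pf^(α)(B), where J_m is the block-diagonal matrix with blocks [[0,1],[-1,0]]. -/
/-! Conjugation by `J_m` swaps the two rows and the two columns inside every `2 × 2` block, up to
sign: `B̃_{ij}(r,s) = (-1)^{i+j} B_{i+1,j+1}(r,s)`. Substituting `i ↦ i + 1` in the sum defining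
`P(B)(τ)`, each sign `(-1)^{i_l}` then occurs twice, so `P(B̃)(τ) = P(B)(τ)` for every cycle `τ`,
and the α-pfaffian, built from these cycle factors alone, is unchanged. -/

open Matrix
open scoped Classical

/-- The `(i,j)` entry (indices in `ZMod 2`) of the `2 × 2` block `B(r,s)` of `B`. -/
def Bblk {m : ℕ} (B : Matrix (Fin (2 * m)) (Fin (2 * m)) ℂ) (r s : Fin m)
    (i j : ZMod 2) : ℂ :=
  B ⟨2 * r.val + i.val, by have := r.isLt; have := ZMod.val_lt i; omega⟩
    ⟨2 * s.val + j.val, by have := s.isLt; have := ZMod.val_lt j; omega⟩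

/-- `P(B)(τ)` for the cycle `τ = (k 0, …, k (r-1))`. -/
noncomputable def Pcyc {m r : ℕ} [NeZero r] (B : Matrix (Fin (2 * m)) (Fin (2 * m)) ℂ)
    (k : Fin r → Fin m) : ℂ :=
  (1 / 2) * ∑ i : Fin r → ZMod 2,
    (∏ j, (-1 : ℂ) ^ (i j).val) * ∏ j, Bblk B (k j) (k (j + 1)) (i j) (i (j + 1) + 1)

/-- The set of minimal representatives of the cycles (orbits) of `σ`. -/
noncomputable def reps {m : ℕ} (σ : Equiv.Perm (Fin m)) : Finset (Fin m) :=
  Finset.univ.filter fun x => ∀ n : ℕ, x ≤ (σ ^ n) x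

/-- The number of cycles (orbits, including fixed points) of `σ`. -/
noncomputable def nu {m : ℕ} (σ : Equiv.Perm (Fin m)) : ℕ := (reps σ).card

/-- The length of the cycle of `σ` through `x`. -/
noncomputable def cycLen {m : ℕ} (σ : Equiv.Perm (Fin m)) (x : Fin m) : ℕ :=
  orderOf (σ.cycleOf x)

/-- The α-pfaffian `pf^(α)(B) = ∑_σ α^{m-ν(σ)} ∏ⱼ P(B)(σ⁽ʲ⁾)`, the product being
over the cycles of `σ`, each represented by its minimal element. -/
noncomputable def apf {m : ℕ} (α : ℂ) (B : Matrix (Fin (2 * m)) (Fin (2 * m)) ℂ) : ℂ :=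
  ∑ σ : Equiv.Perm (Fin m), α ^ (m - nu σ) *
    ∏ x ∈ reps σ,
      haveI : NeZero (cycLen σ x) := ⟨(orderOf_pos _).ne'⟩
      Pcyc B (fun j : Fin (cycLen σ x) => (σ ^ (j : ℕ)) x)

/-- The `2m × 2m` block-diagonal matrix `J_m` with diagonal blocks `[[0,1],[-1,0]]`. -/
def Jmat (m : ℕ) : Matrix (Fin (2 * m)) (Fin (2 * m)) ℂ :=
  fun i j => if i.val % 2 = 0 ∧ j.val = i.val + 1 then 1
    else if j.val % 2 = 0 ∧ i.val = j.val + 1 then -1 else 0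

def partner {m : ℕ} (p : Fin (2 * m)) : Fin (2 * m) :=
  ⟨if p.val % 2 = 0 then p.val + 1 else p.val - 1, by have := p.isLt; split <;> omega⟩

def paritySign {m : ℕ} (p : Fin (2 * m)) : ℂ := if p.val % 2 = 0 then -1 else 1

lemma Jmat_apply_eq_ite {m : ℕ} (k p : Fin (2 * m)) :
    Jmat m k p = if k = partner p then paritySign p else 0 := by
  unfold Jmat partner paritySign
  split_ifs <;> simp_all [Fin.ext_iff] <;> omega

lemma mul_Jmat_apply {m : ℕ} (A : Matrix (Fin (2 * m)) (Fin (2 * m)) ℂ) (p q : Fin (2 * m)) :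
    (A * Jmat m) p q = A p (partner q) * paritySign q := by
  simp [Matrix.mul_apply, Jmat_apply_eq_ite]

lemma transpose_Jmat_mul_apply {m : ℕ} (A : Matrix (Fin (2 * m)) (Fin (2 * m)) ℂ)
    (p q : Fin (2 * m)) :
    ((Jmat m)ᵀ * A) p q = paritySign p * A (partner p) q := by
  simp [Matrix.mul_apply, Jmat_apply_eq_ite]

lemma ZMod.two_val_cases (c : ZMod 2) :
    c.val = 0 ∧ (c + 1).val = 1 ∨ c.val = 1 ∧ (c + 1).val = 0 := by
  fin_cases c <;> decide

lemma partner_blockIndex {m : ℕ} (x : Fin m) (c : ZMod 2) (h : 2 * x.val + c.val < 2 * m) :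
    partner ⟨2 * x.val + c.val, h⟩ = ⟨2 * x.val + (c + 1).val, by
      have := x.isLt; have := ZMod.val_lt (c + 1); omega⟩ := by
  rcases ZMod.two_val_cases c with ⟨h0, h1⟩ | ⟨h0, h1⟩ <;>
    simp only [partner, h0, h1, Fin.ext_iff] <;> split <;> omega

lemma paritySign_blockIndex {m : ℕ} (x : Fin m) (c : ZMod 2) (h : 2 * x.val + c.val < 2 * m) :
    paritySign (⟨2 * x.val + c.val, h⟩ : Fin (2 * m)) = -(-1) ^ c.val := by
  rcases ZMod.two_val_cases c with ⟨h0, -⟩ | ⟨h0, -⟩ <;> simp [paritySign, h0]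

lemma Bblk_transpose_Jmat_mul_mul_Jmat {m : ℕ} (B : Matrix (Fin (2 * m)) (Fin (2 * m)) ℂ)
    (r s : Fin m) (a b : ZMod 2) :
    Bblk ((Jmat m)ᵀ * B * Jmat m) r s a b
      = (-1) ^ a.val * (-1) ^ b.val * Bblk B r s (a + 1) (b + 1) := by
  simp only [Bblk, mul_Jmat_apply, transpose_Jmat_mul_apply, partner_blockIndex,
    paritySign_blockIndex]
  ring

lemma prod_neg_one_pow_mul_self {ι : Type*} [Fintype ι] (i : ι → ZMod 2) :
    (∏ j, (-1 : ℂ) ^ (i j).val) * ∏ j, (-1 : ℂ) ^ (i j).val = 1 := by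
  rw [← Finset.prod_mul_distrib]
  exact Finset.prod_eq_one fun j _ => by rw [← pow_add, Even.neg_one_pow ⟨_, rfl⟩]

lemma Pcyc_eq_of_Bblk_eq {m r : ℕ} [NeZero r] {B B' : Matrix (Fin (2 * m)) (Fin (2 * m)) ℂ}
    (hB : ∀ u v a b, Bblk B' u v a b = (-1) ^ a.val * (-1) ^ b.val * Bblk B u v (a + 1) (b + 1))
    (k : Fin r → Fin m) :
    Pcyc B' k = Pcyc B k := by
  unfold Pcyc
  congr 1
  refine Fintype.sum_equiv (Equiv.addRight 1) _ _ fun i => ?_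
  simp only [Equiv.coe_addRight, Pi.add_apply, Pi.one_apply, hB, Finset.prod_mul_distrib]
  have hrot : ∏ j : Fin r, (-1 : ℂ) ^ (i (j + 1) + 1).val =
      ∏ j : Fin r, (-1 : ℂ) ^ (i j + 1).val :=
    Fintype.prod_equiv (Equiv.addRight 1) _ _ fun _ => rfl
  rw [hrot]
  linear_combination (∏ j, (-1 : ℂ) ^ (i j + 1).val) *
    (∏ j, Bblk B (k j) (k (j + 1)) (i j + 1) (i (j + 1) + 1 + 1)) * prod_neg_one_pow_mul_self i

lemma apf_congr_of_Pcyc_eq {m : ℕ} (α : ℂ) {B B' : Matrix (Fin (2 * m)) (Fin (2 * m)) ℂ}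
    (h : ∀ (r : ℕ) [NeZero r] (k : Fin r → Fin m), Pcyc B' k = Pcyc B k) :
    apf α B' = apf α B := by
  unfold apf
  refine Finset.sum_congr rfl fun σ _ => congrArg _ (Finset.prod_congr rfl fun x _ => ?_)
  have : NeZero (cycLen σ x) := ⟨(orderOf_pos _).ne'⟩
  exact h _ _

theorem apf_conj_J_general (m : ℕ) (α : ℂ) (B : Matrix (Fin (2 * m)) (Fin (2 * m)) ℂ) :
    apf α ((Jmat m)ᵀ * B * Jmat m) = apf α B :=
  apf_congr_of_Pcyc_eq α fun _ _ => Pcyc_eq_of_Bblk_eq (Bblk_transpose_Jmat_mul_mul_Jmat B)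

theorem apf_conj_J (m : ℕ) (α : ℂ) (B : Matrix (Fin (2 * m)) (Fin (2 * m)) ℂ)
    (hB : Bᵀ = -B) :
    apf α ((Jmat m)ᵀ * B * Jmat m) = apf α B :=
  apf_conj_J_general m α B
end

section
/- Let B be a 2m×2m skew-symmetric matrix with 2×2 blocks and J_m the standard block-diagonal skew form. Then pf^(α)(J_m + zB) = ∑_{S ⊆ {1,...,m}} z^{|S|} pf^(α)(B[S]), where B[S] is the skew-symmetric submatrix formed by the blocks of B indexed by S. -/
open Matrix
open scoped Classical

/-- The embedding `Fin (2k) → Fin (2m)` induced on block positions by `t : Fin k → Fin m`. -/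
def emb {m k : ℕ} (t : Fin k → Fin m) (i : Fin (2 * k)) : Fin (2 * m) :=
  have h : i.val / 2 < k := by have := i.isLt; omega
  ⟨2 * (t ⟨i.val / 2, h⟩).val + i.val % 2, by have := (t ⟨i.val / 2, h⟩).isLt; omega⟩

/-- The `2k × 2k` submatrix of `B` formed by the `2 × 2` blocks `B(t i, t j)`. -/
def blockSub {m k : ℕ} (B : Matrix (Fin (2 * m)) (Fin (2 * m)) ℂ) (t : Fin k → Fin m) :
    Matrix (Fin (2 * k)) (Fin (2 * k)) ℂ :=
  B.submatrix (emb t) (emb t)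

/-!
The only nonzero entries of `J_m` lie in its diagonal `2 × 2` blocks, so in `J_m + zB` the factor
`P(J_m + zB)` of a cycle of length `ℓ ≥ 2` is `z^ℓ P(B)`, while that of a fixed point `x` is
`1 + z P(B)(x)`. Expanding the product over the fixed points of `σ` turns the `σ`-term of
`pf^(α)(J_m + zB)` into a sum over the sets `S ⊇ supp σ` of `z^|S| α^(m-ν(σ)) ∏ P(B)`, the
product running over the cycles of `σ` inside `S`. The permutations of `{1,…,m}` supported in `S`
are the permutations of the blocks indexed by `S`, with the same cycles inside `S` and `m - |S|`
further fixed points, so exchanging the two sums yields `∑_S z^|S| pf^(α)(B[S])`.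
-/

open Equiv Equiv.Perm Finset

section Cycles

variable {m : ℕ} {σ : Perm (Fin m)} {x y : Fin m}

instance (σ : Perm (Fin m)) (x : Fin m) : NeZero (cycLen σ x) := ⟨(orderOf_pos _).ne'⟩

lemma pow_apply_eq_self_iff_cycLen_dvd {n : ℕ} : (σ ^ n) x = x ↔ cycLen σ x ∣ n := by
  rw [cycLen, orderOf_dvd_iff_pow_eq_one]
  by_cases hx : σ x = x
  · simp [(cycleOf_eq_one_iff σ).mpr hx, pow_apply_eq_self_of_apply_eq_self hx]
  · rw [(isCycle_cycleOf σ hx).pow_eq_one_iff' (x := x) (by rwa [cycleOf_apply_self]),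
      cycleOf_pow_apply_self]

lemma cycLen_eq_one (h : σ x = x) : cycLen σ x = 1 := by
  simp [cycLen, (cycleOf_eq_one_iff σ).mpr h]

lemma pow_mod_cycLen_apply (n : ℕ) : (σ ^ (n % cycLen σ x)) x = (σ ^ n) x :=
  pow_mod_orderOf_cycleOf_apply σ n x

lemma pow_val_add_one_apply (j : Fin (cycLen σ x)) :
    (σ ^ ((j + 1 : Fin (cycLen σ x)) : ℕ)) x = σ ((σ ^ (j : ℕ)) x) := by
  rw [Fin.val_add, Fin.val_one', Nat.add_mod_mod, pow_mod_cycLen_apply, pow_succ', mul_apply]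

lemma mem_reps : x ∈ reps σ ↔ ∀ n : ℕ, x ≤ (σ ^ n) x := by simp [reps]

lemma mem_reps_of_apply_eq_self (h : σ x = x) : x ∈ reps σ :=
  mem_reps.mpr fun n => (pow_apply_eq_self_of_apply_eq_self h n).ge

lemma exists_mem_reps_sameCycle (y : Fin m) : ∃ x ∈ reps σ, σ.SameCycle y x := by
  set O := univ.filter (σ.SameCycle y)
  have hO : O.Nonempty := ⟨y, by simpa [O] using SameCycle.refl σ y⟩
  have hmin : σ.SameCycle y (O.min' hO) := by simpa [O] using O.min'_mem hO
  refine ⟨O.min' hO, mem_reps.mpr fun n => O.min'_le _ ?_, hmin⟩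
  simpa [O] using hmin

lemma eq_of_mem_reps_of_sameCycle (hx : x ∈ reps σ) (hy : y ∈ reps σ) (h : σ.SameCycle x y) :
    x = y := by
  obtain ⟨i, -, rfl⟩ := h.exists_pow_eq'
  obtain ⟨j, -, hj⟩ := h.symm.exists_pow_eq'
  exact le_antisymm (mem_reps.mp hx i) ((mem_reps.mp hy j).trans_eq hj)

lemma reps_sdiff_support : reps σ \ σ.support = σ.supportᶜ := by
  ext x
  simp only [mem_sdiff, mem_compl, and_iff_right_iff_imp]
  exact fun hx => mem_reps_of_apply_eq_self (notMem_support.mp hx)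

lemma sum_cycLen_reps_inter_support :
    ∑ x ∈ reps σ ∩ σ.support, cycLen σ x = #σ.support := by
  have hcover : σ.support = (reps σ ∩ σ.support).biUnion fun x => (σ.cycleOf x).support := by
    ext y
    simp only [mem_biUnion, mem_inter, mem_support_cycleOf_iff]
    constructor
    · intro hy
      obtain ⟨x, hx, hyx⟩ := exists_mem_reps_sameCycle (σ := σ) y
      exact ⟨x, ⟨hx, hyx.mem_support_iff.mp hy⟩, hyx.symm, hyx.mem_support_iff.mp hy⟩
    · rintro ⟨x, -, hxy, hx⟩
      exact hxy.mem_support_iff.mp hx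
  rw [congrArg card hcover, card_biUnion]
  · exact sum_congr rfl fun x hx =>
      (isCycle_cycleOf σ (mem_support.mp (mem_inter.mp hx).2)).orderOf
  · intro x hx x' hx' hne
    refine disjoint_left.mpr fun y hy hy' => hne ?_
    rw [mem_support_cycleOf_iff] at hy hy'
    exact eq_of_mem_reps_of_sameCycle (mem_inter.mp hx).1 (mem_inter.mp hx').1
      (hy.1.trans hy'.1.symm)

end Cycles

section Blocks

variable {m : ℕ}

lemma Bblk_add (A C : Matrix (Fin (2 * m)) (Fin (2 * m)) ℂ) (r s : Fin m) (i j : ZMod 2) :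
    Bblk (A + C) r s i j = Bblk A r s i j + Bblk C r s i j := rfl

lemma Bblk_smul (z : ℂ) (A : Matrix (Fin (2 * m)) (Fin (2 * m)) ℂ) (r s : Fin m)
    (i j : ZMod 2) : Bblk (z • A) r s i j = z * Bblk A r s i j := rfl

lemma Bblk_Jmat_of_ne {r s : Fin m} (h : r ≠ s) (i j : ZMod 2) : Bblk (Jmat m) r s i j = 0 := by
  have := ZMod.val_lt i
  have := ZMod.val_lt j
  have := Fin.val_ne_of_ne h
  simp only [Bblk, Jmat]
  split_ifs <;> first | rfl | omega

lemma Bblk_Jmat_zero_one (r : Fin m) : Bblk (Jmat m) r r 0 1 = 1 := by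
  simp [Bblk, Jmat, ZMod.val_one]

lemma Bblk_Jmat_one_zero (r : Fin m) : Bblk (Jmat m) r r 1 0 = -1 := by
  simp [Bblk, Jmat, ZMod.val_one]

lemma Pcyc_congr {r r' : ℕ} [NeZero r] [NeZero r'] (h : r = r')
    (A : Matrix (Fin (2 * m)) (Fin (2 * m)) ℂ) {k : Fin r → Fin m} {k' : Fin r' → Fin m}
    (hk : ∀ j, k j = k' (Fin.cast h j)) : Pcyc A k = Pcyc A k' := by
  subst h
  obtain rfl : k = k' := funext hk
  rfl

lemma Pcyc_const_one (A : Matrix (Fin (2 * m)) (Fin (2 * m)) ℂ) (x : Fin m) :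
    Pcyc A (fun _ : Fin 1 => x) = (Bblk A x x 0 1 - Bblk A x x 1 0) / 2 := by
  simp only [Pcyc, Fin.prod_univ_one, Fin.isValue, zero_add]
  rw [Fintype.sum_equiv (Equiv.funUnique (Fin 1) (ZMod 2))
    (fun i => (-1 : ℂ) ^ (i 0).val * Bblk A x x (i 0) (i 0 + 1))
    (fun a => (-1 : ℂ) ^ a.val * Bblk A x x a (a + 1)) (fun _ => rfl)]
  -- `ZMod 2` unfolds to `Fin 2`
  erw [Fin.sum_univ_two]
  change 1 / 2 * ((-1 : ℂ) ^ 0 * Bblk A x x 0 1 + (-1) ^ 1 * Bblk A x x 1 0) = _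
  ring

lemma emb_mk {k : ℕ} (t : Fin k → Fin m) (r : Fin k) {i : ℕ} (hi : i < 2)
    (h : 2 * r.val + i < 2 * k) :
    emb t ⟨2 * r.val + i, h⟩ = ⟨2 * (t r).val + i, by have := (t r).isLt; omega⟩ := by
  have hdiv : (2 * r.val + i) / 2 = r.val := by omega
  have hmod : (2 * r.val + i) % 2 = i := by omega
  simp only [emb, hdiv, hmod]

lemma Bblk_blockSub {k : ℕ} (B : Matrix (Fin (2 * m)) (Fin (2 * m)) ℂ) (t : Fin k → Fin m)
    (r s : Fin k) (i j : ZMod 2) : Bblk (blockSub B t) r s i j = Bblk B (t r) (t s) i j := by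
  rw [Bblk, blockSub, submatrix_apply, emb_mk t r (ZMod.val_lt i), emb_mk t s (ZMod.val_lt j),
    Bblk]

lemma Pcyc_blockSub {k r : ℕ} [NeZero r] (B : Matrix (Fin (2 * m)) (Fin (2 * m)) ℂ)
    (t : Fin k → Fin m) (c : Fin r → Fin k) : Pcyc (blockSub B t) c = Pcyc B (t ∘ c) := by
  simp only [Pcyc, Bblk_blockSub, Function.comp_apply]

lemma Pcyc_Jmat_add_smul {r : ℕ} [NeZero r] (z : ℂ) (B : Matrix (Fin (2 * m)) (Fin (2 * m)) ℂ)
    {c : Fin r → Fin m} (hc : ∀ j, c j ≠ c (j + 1)) :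
    Pcyc (Jmat m + z • B) c = z ^ r * Pcyc B c := by
  simp only [Pcyc, Bblk_add, Bblk_Jmat_of_ne (hc _), Bblk_smul, zero_add, prod_mul_distrib,
    prod_const, card_univ, Fintype.card_fin, mul_sum]
  exact sum_congr rfl fun _ _ => by ring

end Blocks

section CycleWeight

variable {m : ℕ} {σ : Perm (Fin m)} {x : Fin m}

noncomputable def cycleWeight (A : Matrix (Fin (2 * m)) (Fin (2 * m)) ℂ) (σ : Perm (Fin m))
    (x : Fin m) : ℂ :=
  Pcyc A (fun j : Fin (cycLen σ x) => (σ ^ (j : ℕ)) x)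

lemma apf_eq_sum_prod_cycleWeight (α : ℂ) (A : Matrix (Fin (2 * m)) (Fin (2 * m)) ℂ) :
    apf α A = ∑ σ : Perm (Fin m), α ^ (m - nu σ) * ∏ x ∈ reps σ, cycleWeight A σ x :=
  rfl

lemma cycleWeight_of_apply_eq_self (A : Matrix (Fin (2 * m)) (Fin (2 * m)) ℂ) (h : σ x = x) :
    cycleWeight A σ x = (Bblk A x x 0 1 - Bblk A x x 1 0) / 2 := by
  rw [cycleWeight, Pcyc_congr (cycLen_eq_one h) A (k' := fun _ => x)
    (fun j => pow_apply_eq_self_of_apply_eq_self h _), Pcyc_const_one]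

lemma cycleWeight_Jmat_add_smul_of_apply_eq_self (z : ℂ)
    (B : Matrix (Fin (2 * m)) (Fin (2 * m)) ℂ) (h : σ x = x) :
    cycleWeight (Jmat m + z • B) σ x = 1 + z * cycleWeight B σ x := by
  rw [cycleWeight_of_apply_eq_self _ h, cycleWeight_of_apply_eq_self _ h, Bblk_add, Bblk_add,
    Bblk_smul, Bblk_smul, Bblk_Jmat_zero_one, Bblk_Jmat_one_zero]
  ring

lemma cycleWeight_Jmat_add_smul_of_apply_ne (z : ℂ)
    (B : Matrix (Fin (2 * m)) (Fin (2 * m)) ℂ) (h : σ x ≠ x) :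
    cycleWeight (Jmat m + z • B) σ x = z ^ cycLen σ x * cycleWeight B σ x := by
  refine Pcyc_Jmat_add_smul z B fun j hj => h ?_
  rw [pow_val_add_one_apply, ← mul_apply, ← pow_succ', pow_succ, mul_apply] at hj
  exact ((σ ^ (j : ℕ)).injective hj).symm

end CycleWeight

section Semiconj

variable {m k : ℕ} {τ : Perm (Fin k)} {σ : Perm (Fin m)}

lemma pow_apply_of_semiconj {t : Fin k → Fin m} (h : ∀ y, σ (t y) = t (τ y)) (n : ℕ)
    (y : Fin k) : (σ ^ n) (t y) = t ((τ ^ n) y) := by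
  induction n with
  | zero => rfl
  | succ n ih => rw [pow_succ', mul_apply, ih, h, ← mul_apply, ← pow_succ']

lemma cycLen_of_semiconj {t : Fin k → Fin m} (ht : Function.Injective t)
    (h : ∀ y, σ (t y) = t (τ y)) (y : Fin k) : cycLen σ (t y) = cycLen τ y := by
  have key : ∀ n, cycLen σ (t y) ∣ n ↔ cycLen τ y ∣ n := fun n => by
    rw [← pow_apply_eq_self_iff_cycLen_dvd, ← pow_apply_eq_self_iff_cycLen_dvd,
      pow_apply_of_semiconj h, ht.eq_iff]
  exact Nat.dvd_antisymm ((key _).mpr dvd_rfl) ((key _).mp dvd_rfl)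

lemma mem_reps_of_semiconj (t : Fin k ↪o Fin m) (h : ∀ y, σ (t y) = t (τ y)) (y : Fin k) :
    t y ∈ reps σ ↔ y ∈ reps τ := by
  simp only [mem_reps, pow_apply_of_semiconj h, t.le_iff_le]

lemma cycleWeight_of_semiconj (B : Matrix (Fin (2 * m)) (Fin (2 * m)) ℂ) {t : Fin k → Fin m}
    (ht : Function.Injective t) (h : ∀ y, σ (t y) = t (τ y)) (y : Fin k) :
    cycleWeight B σ (t y) = cycleWeight (blockSub B t) τ y := by
  rw [cycleWeight, cycleWeight, Pcyc_blockSub]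
  exact Pcyc_congr (cycLen_of_semiconj ht h y) B fun j => pow_apply_of_semiconj h j y

end Semiconj

section Extend

variable {m : ℕ} (S : Finset (Fin m))

noncomputable def extendPerm :
    Perm (Fin #S) ≃ {σ : Perm (Fin m) // ∀ x, x ∉ S → σ x = x} :=
  (S.orderIsoOfFin rfl).toEquiv.permCongr.trans (Perm.subtypeEquivSubtypePerm (· ∈ S))

lemma extendPerm_apply_orderEmbOfFin (τ : Perm (Fin #S)) (y : Fin #S) :
    (extendPerm S τ : Perm (Fin m)) (S.orderEmbOfFin rfl y) = S.orderEmbOfFin rfl (τ y) := by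
  simp [extendPerm, ← coe_orderIsoOfFin_apply]

variable {S} {τ : Perm (Fin #S)} {σ : Perm (Fin m)}

lemma reps_inter_eq_map (h : ∀ y, σ (S.orderEmbOfFin rfl y) = S.orderEmbOfFin rfl (τ y)) :
    reps σ ∩ S = (reps τ).map (S.orderEmbOfFin rfl).toEmbedding := by
  ext x
  simp only [mem_inter, mem_map, RelEmbedding.coe_toEmbedding]
  constructor
  · rintro ⟨hx, hxS⟩
    obtain ⟨y, rfl⟩ : x ∈ Set.range (S.orderEmbOfFin rfl) := by
      rwa [range_orderEmbOfFin]
    exact ⟨y, (mem_reps_of_semiconj _ h y).mp hx, rfl⟩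
  · rintro ⟨y, hy, rfl⟩
    exact ⟨(mem_reps_of_semiconj _ h y).mpr hy, orderEmbOfFin_mem S rfl y⟩

lemma nu_eq_of_semiconj (hσ : ∀ x, x ∉ S → σ x = x)
    (h : ∀ y, σ (S.orderEmbOfFin rfl y) = S.orderEmbOfFin rfl (τ y)) :
    nu σ = nu τ + (m - #S) := by
  have hout : reps σ \ S = Sᶜ := by
    ext x
    simp only [mem_sdiff, mem_compl, and_iff_right_iff_imp]
    exact fun hx => mem_reps_of_apply_eq_self (hσ x hx)
  rw [nu, ← card_inter_add_card_sdiff (reps σ) S, reps_inter_eq_map h, hout, card_map,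
    card_compl, Fintype.card_fin, nu]

lemma apf_blockSub_orderEmbOfFin (α : ℂ) (B : Matrix (Fin (2 * m)) (Fin (2 * m)) ℂ) :
    apf α (blockSub B (S.orderEmbOfFin rfl)) =
      ∑ σ : Perm (Fin m) with σ.support ⊆ S,
        α ^ (m - nu σ) * ∏ x ∈ reps σ ∩ S, cycleWeight B σ x := by
  rw [apf_eq_sum_prod_cycleWeight,
    sum_subtype _ (p := fun σ : Perm (Fin m) => ∀ x, x ∉ S → σ x = x)
      (by simp [subset_iff, not_imp_comm])]
  refine Fintype.sum_equiv (extendPerm S) _ _ fun τ => ?_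
  have h := extendPerm_apply_orderEmbOfFin S τ
  have hσ := (extendPerm S τ).2
  have hν : nu τ ≤ #S := (card_le_univ _).trans_eq (Fintype.card_fin _)
  have hS : #S ≤ m := (card_le_univ _).trans_eq (Fintype.card_fin _)
  rw [reps_inter_eq_map h, prod_map, nu_eq_of_semiconj hσ h,
    show m - (nu τ + (m - #S)) = #S - nu τ by omega]
  exact congrArg _ (prod_congr rfl fun y _ =>
    (cycleWeight_of_semiconj B (S.orderEmbOfFin rfl).injective h y).symm)

end Extend

lemma prod_cycleWeight_Jmat_add_smul {m : ℕ} (z : ℂ)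
    (B : Matrix (Fin (2 * m)) (Fin (2 * m)) ℂ) (σ : Perm (Fin m)) :
    ∏ x ∈ reps σ, cycleWeight (Jmat m + z • B) σ x =
      ∑ S ∈ Icc σ.support univ, z ^ #S * ∏ x ∈ reps σ ∩ S, cycleWeight B σ x := by
  have hmoved : ∏ x ∈ reps σ ∩ σ.support, cycleWeight (Jmat m + z • B) σ x =
      z ^ #σ.support * ∏ x ∈ reps σ ∩ σ.support, cycleWeight B σ x := by
    rw [prod_congr rfl fun x hx => cycleWeight_Jmat_add_smul_of_apply_ne z B
      (mem_support.mp (mem_inter.mp hx).2), prod_mul_distrib, prod_pow_eq_pow_sum,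
      sum_cycLen_reps_inter_support]
  have hfixed : ∏ x ∈ σ.supportᶜ, cycleWeight (Jmat m + z • B) σ x =
      ∑ T ∈ σ.supportᶜ.powerset, z ^ #T * ∏ x ∈ T, cycleWeight B σ x := by
    rw [prod_congr rfl fun x hx => cycleWeight_Jmat_add_smul_of_apply_eq_self z B
      (notMem_support.mp (mem_compl.mp hx)), prod_one_add]
    simp only [prod_mul_distrib, prod_const]
  have hdisj : ∀ T ∈ σ.supportᶜ.powerset, Disjoint σ.support T := fun T hT =>
    disjoint_of_subset_right (mem_powerset.mp hT) disjoint_compl_right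
  rw [← prod_inter_mul_prod_sdiff (reps σ) σ.support, reps_sdiff_support, hmoved, hfixed,
    mul_sum, Icc_eq_image_powerset (subset_univ _), ← compl_eq_univ_sdiff,
    sum_image fun T hT T' hT' h => by
      rw [← union_sdiff_cancel_left (hdisj T hT), h, union_sdiff_cancel_left (hdisj T' hT')]]
  refine sum_congr rfl fun T hT => ?_
  have hTreps : T ⊆ reps σ := fun x hx => mem_reps_of_apply_eq_self
    (notMem_support.mp (mem_compl.mp (mem_powerset.mp hT hx)))
  rw [inter_union_distrib_left, inter_eq_right.mpr hTreps,
    prod_union ((hdisj T hT).mono_left inter_subset_right), card_union_of_disjoint (hdisj T hT),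
    pow_add]
  ring

theorem apf_J_add_smul_general (m : ℕ) (α z : ℂ) (B : Matrix (Fin (2 * m)) (Fin (2 * m)) ℂ) :
    apf α (Jmat m + z • B) =
      ∑ S : Finset (Fin m), z ^ S.card * apf α (blockSub B ⇑(S.orderEmbOfFin rfl)) := by
  simp_rw [apf_blockSub_orderEmbOfFin, apf_eq_sum_prod_cycleWeight,
    prod_cycleWeight_Jmat_add_smul, mul_sum]
  exact (sum_comm' fun σ S => by simp).trans
    (sum_congr rfl fun S _ => sum_congr rfl fun σ _ => by ring)

theorem apf_J_add_smul (m : ℕ) (α z : ℂ) (B : Matrix (Fin (2 * m)) (Fin (2 * m)) ℂ)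
    (hB : Bᵀ = -B) :
    apf α (Jmat m + z • B) =
      ∑ S : Finset (Fin m), z ^ S.card * apf α (blockSub B ⇑(S.orderEmbOfFin rfl)) :=
  apf_J_add_smul_general m α z B
end

section
/- Let B be a 2m×2m complex skew-symmetric matrix such that -J_m B is a non-negative definite Hermitian matrix, where J_m is the block-diagonal matrix with 2×2 blocks [[0,1],[-1,0]]. Then pf(B[S]) ≥ 0 for every subset S ⊆ {1,...,m}, where B[S] is the skew-symmetric submatrix formed by the 2×2 blocks of B indexed by S. In particular pf(B) ≥ 0. -/
open Matrix
open scoped Classical ComplexOrder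

/-- The Pfaffian of an `N × N` skew-symmetric matrix (meaningful for even `N`). -/
noncomputable def pf {N : ℕ} {R : Type*} [CommRing R] (A : Matrix (Fin N) (Fin N) R) : R :=
  ∑ σ ∈ Finset.univ.filter (fun σ : Equiv.Perm (Fin N) =>
      (∀ j : Fin (N / 2),
        (σ ⟨2 * j.val, by have := j.isLt; omega⟩).val
          < (σ ⟨2 * j.val + 1, by have := j.isLt; omega⟩).val) ∧
      (∀ j k : Fin (N / 2), j < k →
        (σ ⟨2 * j.val, by have := j.isLt; omega⟩).val
          < (σ ⟨2 * k.val, by have := k.isLt; omega⟩).val)),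
    ((Equiv.Perm.sign σ : ℤ) : R) *
      ∏ j : Fin (N / 2),
        A (σ ⟨2 * j.val, by have := j.isLt; omega⟩) (σ ⟨2 * j.val + 1, by have := j.isLt; omega⟩)

/-!
Put `A = -J B`. It is positive semidefinite with `Aᵀ = J A Jᴴ`, so its square root `C` satisfies
`Cᵀ = J C Jᴴ`, which gives `B = Cᵀ J C`. Since `pf (P A Pᵀ) = det P * pf A` for skew `A`, this yields
`pf B = det C * pf J = det C ≥ 0`. Block submatrices inherit both hypotheses because `J` is
block diagonal.

The congruence rule is proved for the sum of `pfTerm` over all permutations, which expands like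
`det (M * N)`. That sum is `#G * pf A`: for skew `A`, `pfTerm` is invariant under the group `G` of
permutations mapping the pairs `{2j, 2j+1}` to pairs, and `pfPerms` is a set of representatives of
the right cosets of `G`.
-/

open Equiv Equiv.Perm Finset

def pairEquiv {n N : ℕ} (h : 2 * n = N) : Fin n × Fin 2 ≃ Fin N where
  toFun p := ⟨2 * p.1 + p.2, by omega⟩
  invFun x := (⟨x / 2, by omega⟩, ⟨x % 2, by omega⟩)
  left_inv p := by ext <;> simp <;> omega
  right_inv x := by ext; simp; omega

@[simp]
theorem coe_pairEquiv {n N : ℕ} (h : 2 * n = N) (p : Fin n × Fin 2) :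
    (pairEquiv h p : ℕ) = 2 * p.1 + p.2 := rfl

theorem Equiv.Perm.eq_one_or_eq_swap_fin_two (ψ : Perm (Fin 2)) : ψ = 1 ∨ ψ = swap 0 1 := by
  revert ψ; decide

theorem apply_perm_fin_two_of_antisymm {R : Type*} [CommRing R] {g : Fin 2 → Fin 2 → R}
    (hg : ∀ a b, g b a = -g a b) (ψ : Perm (Fin 2)) : g (ψ 0) (ψ 1) = sign ψ * g 0 1 := by
  rcases ψ.eq_one_or_eq_swap_fin_two with rfl | rfl
  · simp
  · simp [hg 0 1]

section Pfaffian

variable {N : ℕ} (hN : 2 * (N / 2) = N) {R : Type*} [CommRing R]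

def pfPerms : Finset (Perm (Fin N)) :=
  {σ | (∀ j, σ (pairEquiv hN (j, 0)) < σ (pairEquiv hN (j, 1))) ∧
    StrictMono fun j => σ (pairEquiv hN (j, 0))}

def pfTerm (A : Matrix (Fin N) (Fin N) R) (σ : Perm (Fin N)) : R :=
  sign σ * ∏ j, A (σ (pairEquiv hN (j, 0))) (σ (pairEquiv hN (j, 1)))

theorem pf_eq_sum_pfTerm (A : Matrix (Fin N) (Fin N) R) :
    pf A = ∑ σ ∈ pfPerms hN, pfTerm hN A σ := rfl

theorem mem_pfPerms {σ : Perm (Fin N)} : σ ∈ pfPerms hN ↔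
    (∀ j, σ (pairEquiv hN (j, 0)) < σ (pairEquiv hN (j, 1))) ∧
      StrictMono fun j => σ (pairEquiv hN (j, 0)) := by
  simp [pfPerms]

theorem one_mem_pfPerms : 1 ∈ pfPerms hN := by
  refine (mem_pfPerms hN).2 ⟨fun j => ?_, fun a b hab => ?_⟩
  · simp [Fin.lt_def]
  · rw [Fin.lt_def] at hab ⊢
    simp
    omega

abbrev PairShearData (n : ℕ) := Perm (Fin n) × (Fin n → Perm (Fin 2))

def pairShear (p : PairShearData (N / 2)) : Perm (Fin N) :=
  (pairEquiv hN).permCongr (p.1.prodShear p.2)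

@[simp]
theorem pairShear_apply_pairEquiv (p : PairShearData (N / 2)) (j : Fin (N / 2)) (b : Fin 2) :
    pairShear hN p (pairEquiv hN (j, b)) = pairEquiv hN (p.1 j, p.2 j b) := by
  simp [pairShear, prodShear]

theorem pairShear_one : pairShear hN 1 = 1 := by
  ext x; simp [pairShear, prodShear]

theorem sign_pairShear (p : PairShearData (N / 2)) :
    sign (pairShear hN p) = ∏ j, sign (p.2 j) := by
  have : p.1.prodShear p.2 = (prodCongrLeft fun _ => p.1) * prodCongrRight p.2 := by
    ext ⟨j, b⟩ <;> rfl
  rw [pairShear, sign_permCongr, this, Perm.sign_mul, sign_prodCongrRight, sign_prodCongrLeft]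
  simp

def pairShearGroup : Subgroup (Perm (Fin N)) where
  carrier := Set.range (pairShear hN)
  mul_mem' := by
    rintro _ _ ⟨p, rfl⟩ ⟨q, rfl⟩
    exact ⟨(p.1 * q.1, fun j => p.2 (q.1 j) * q.2 j), by ext x; simp [pairShear, prodShear]⟩
  one_mem' := ⟨1, pairShear_one hN⟩
  inv_mem' := by
    rintro _ ⟨p, rfl⟩
    refine ⟨(p.1⁻¹, fun i => (p.2 (p.1⁻¹ i))⁻¹), ?_⟩
    rw [eq_inv_iff_mul_eq_one]
    ext x; simp [pairShear, prodShear]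

theorem pfTerm_mul_pairShear {A : Matrix (Fin N) (Fin N) R} (hA : Aᵀ = -A) (σ : Perm (Fin N))
    (p : PairShearData (N / 2)) : pfTerm hN A (σ * pairShear hN p) = pfTerm hN A σ := by
  have hpair (j) : A ((σ * pairShear hN p) (pairEquiv hN (j, 0)))
      ((σ * pairShear hN p) (pairEquiv hN (j, 1))) =
      sign (p.2 j) * A (σ (pairEquiv hN (p.1 j, 0))) (σ (pairEquiv hN (p.1 j, 1))) := by
    simpa using apply_perm_fin_two_of_antisymm (g := fun a b => A (σ (pairEquiv hN (p.1 j, a)))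
      (σ (pairEquiv hN (p.1 j, b)))) (fun a b => by simpa using congrFun₂ hA _ _) (p.2 j)
  have hsq (j) : ((sign (p.2 j) : ℤ) : R) * sign (p.2 j) = 1 := by
    rw [← Int.cast_mul, ← Units.val_mul, Int.units_mul_self, Units.val_one, Int.cast_one]
  simp only [pfTerm, hpair, prod_mul_distrib, Perm.sign_mul, sign_pairShear, Units.val_mul,
    Int.cast_mul, Units.coe_prod, Int.cast_prod,
    Equiv.prod_comp p.1 fun i => A (σ (pairEquiv hN (i, 0))) (σ (pairEquiv hN (i, 1)))]
  rw [mul_assoc, ← mul_assoc (∏ j, _), ← prod_mul_distrib, prod_congr rfl fun j _ => hsq j,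
    prod_const_one, one_mul]

theorem exists_mul_mem_pfPerms (σ : Perm (Fin N)) :
    ∃ g ∈ pairShearGroup hN, σ * g ∈ pfPerms hN := by
  set m : Fin (N / 2) → Fin N := fun j => min (σ (pairEquiv hN (j, 0))) (σ (pairEquiv hN (j, 1)))
  have hm : Function.Injective m := by
    intro j j' h
    have hj := min_choice (σ (pairEquiv hN (j, 0))) (σ (pairEquiv hN (j, 1)))
    have hj' := min_choice (σ (pairEquiv hN (j', 0))) (σ (pairEquiv hN (j', 1)))
    rcases hj with hj | hj <;> rcases hj' with hj' | hj' <;>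
      simpa using congrArg Prod.fst ((pairEquiv hN).injective
        (σ.injective (hj.symm.trans (h.trans hj'))))
  -- Sort the pairs by their smaller entry and orient each pair increasingly.
  set π := Tuple.sort m
  set φ : Fin (N / 2) → Perm (Fin 2) := fun j =>
    if σ (pairEquiv hN (π j, 0)) < σ (pairEquiv hN (π j, 1)) then 1 else swap 0 1
  have hφ (j) : σ (pairEquiv hN (π j, φ j 0)) = m (π j) ∧
      σ (pairEquiv hN (π j, φ j 0)) < σ (pairEquiv hN (π j, φ j 1)) := by
    have hne : σ (pairEquiv hN (π j, 0)) ≠ σ (pairEquiv hN (π j, 1)) := by simp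
    by_cases h : σ (pairEquiv hN (π j, 0)) < σ (pairEquiv hN (π j, 1))
    · simp [φ, m, h, h.le]
    · have h' := lt_of_le_of_ne (not_lt.mp h) hne.symm
      simp [φ, m, h, h'.le, h']
  refine ⟨pairShear hN (π, φ), ⟨_, rfl⟩, (mem_pfPerms hN).2 ⟨fun j => ?_, ?_⟩⟩
  · simpa using (hφ j).2
  · simp only [Perm.mul_apply, pairShear_apply_pairEquiv, fun j => (hφ j).1]
    exact (Tuple.monotone_sort m).strictMono_of_injective (hm.comp π.injective)

theorem eq_one_of_mul_mem_pfPerms {τ g : Perm (Fin N)} (hτ : τ ∈ pfPerms hN)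
    (hg : g ∈ pairShearGroup hN) (hτg : τ * g ∈ pfPerms hN) : g = 1 := by
  obtain ⟨⟨π, φ⟩, rfl⟩ := hg
  rw [mem_pfPerms] at hτ hτg
  simp only [Perm.mul_apply, pairShear_apply_pairEquiv] at hτg
  have hφ (j) : φ j = 1 := by
    rcases (φ j).eq_one_or_eq_swap_fin_two with h | h
    · exact h
    · have := hτg.1 j
      simp only [h, swap_apply_left, swap_apply_right] at this
      exact absurd (hτ.1 (π j)) this.asymm
  simp only [hφ, Perm.one_apply] at hτg
  have hπ : π = 1 :=
    Equiv.ext (congrFun (StrictMono.eq_id fun a b hab => hτ.2.lt_iff_lt.mp (hτg.2 hab)))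
  rw [show (π, φ) = 1 from Prod.ext hπ (funext hφ), pairShear_one]

theorem sum_pfTerm_eq_card_mul_pf {A : Matrix (Fin N) (Fin N) R} (hA : Aᵀ = -A) :
    ∑ σ, pfTerm hN A σ = #{g | g ∈ pairShearGroup hN} * pf A := by
  set G := pairShearGroup hN
  set S : Finset (Perm (Fin N)) := {g | g ∈ G}
  have hmem : ∀ x ∈ pfPerms hN ×ˢ S, x.1 ∈ pfPerms hN ∧ x.2 ∈ G := by simp [S]
  calc ∑ σ, pfTerm hN A σ = ∑ x ∈ pfPerms hN ×ˢ S, pfTerm hN A (x.1 * x.2) := by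
        refine (sum_bij (fun x _ => x.1 * x.2) (fun _ _ => mem_univ _) ?_ ?_ fun _ _ => rfl).symm
        · rintro ⟨τ, g⟩ hx ⟨τ', g'⟩ hx' (h : τ * g = τ' * g')
          obtain ⟨hτ, hg⟩ := hmem _ hx
          obtain ⟨hτ', hg'⟩ := hmem _ hx'
          have hτ'eq : τ * (g * g'⁻¹) = τ' := by rw [← mul_assoc, h, mul_inv_cancel_right]
          obtain rfl : g = g' := mul_inv_eq_one.mp <| eq_one_of_mul_mem_pfPerms hN hτ
            (G.mul_mem hg (G.inv_mem hg')) (hτ'eq ▸ hτ')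
          exact Prod.ext (mul_right_cancel h) rfl
        · intro σ _
          obtain ⟨g, hg, hσg⟩ := exists_mul_mem_pfPerms hN σ
          exact ⟨(σ * g, g⁻¹), by simp [S, hσg, G.inv_mem hg], by simp⟩
    _ = ∑ τ ∈ pfPerms hN, ∑ g ∈ S, pfTerm hN A τ := by
        rw [sum_product]
        refine sum_congr rfl fun τ _ => sum_congr rfl fun g hg => ?_
        obtain ⟨p, rfl⟩ := (mem_filter.mp hg).2
        exact pfTerm_mul_pairShear hN hA τ p
    _ = #S * pf A := by
        simp [pf_eq_sum_pfTerm hN, mul_sum]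

theorem prod_eq_prod_pairs (F : Fin N → R) :
    ∏ x, F x = ∏ j, F (pairEquiv hN (j, 0)) * F (pairEquiv hN (j, 1)) := by
  rw [← (pairEquiv hN).prod_comp, Fintype.prod_prod_type]
  simp [Fin.prod_univ_two]

theorem prod_sum_sum_eq_sum_prod {α : Type*} [Fintype α]
    (G : Fin (N / 2) → α → α → R) :
    ∏ j, ∑ a, ∑ b, G j a b =
      ∑ f : Fin N → α, ∏ j, G j (f (pairEquiv hN (j, 0))) (f (pairEquiv hN (j, 1))) := by
  let e : (Fin N → α) ≃ (Fin (N / 2) → α × α) :=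
    ((pairEquiv hN).arrowCongr (Equiv.refl α)).symm.trans
      ((Equiv.curry _ _ _).trans (Equiv.arrowCongr (Equiv.refl _) (piFinTwoEquiv fun _ => α)))
  simp_rw [← Fintype.sum_prod_type']
  rw [Fintype.prod_sum, ← e.sum_comp]
  rfl

theorem sum_pfTerm_mul_mul_transpose (P A : Matrix (Fin N) (Fin N) R) :
    ∑ σ, pfTerm hN (P * A * Pᵀ) σ = P.det * ∑ σ, pfTerm hN A σ := by
  set pairProd : (Fin N → Fin N) → R := fun f =>
    ∏ j, A (f (pairEquiv hN (j, 0))) (f (pairEquiv hN (j, 1)))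
  calc ∑ σ, pfTerm hN (P * A * Pᵀ) σ
      = ∑ σ : Perm (Fin N), ∑ f : Fin N → Fin N,
          (sign σ * ∏ x, P (σ x) (f x)) * pairProd f := by
        refine sum_congr rfl fun σ _ => ?_
        rw [pfTerm, Matrix.mul_assoc]
        simp only [Matrix.mul_apply, transpose_apply, mul_sum]
        rw [prod_sum_sum_eq_sum_prod hN, mul_sum]
        refine sum_congr rfl fun f _ => ?_
        simp only [pairProd]
        rw [prod_eq_prod_pairs hN, mul_assoc, ← prod_mul_distrib]
        exact congrArg _ (prod_congr rfl fun j _ => by ring)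
    _ = ∑ f : Fin N → Fin N, (∑ σ : Perm (Fin N), sign σ * ∏ x, P (σ x) (f x)) * pairProd f := by
        rw [sum_comm]; simp only [sum_mul]
    _ = ∑ f : Fin N → Fin N with Function.Bijective f,
          (∑ σ : Perm (Fin N), sign σ * ∏ x, P (σ x) (f x)) * pairProd f := by
        refine (sum_subset (filter_subset _ _) fun f _ hf => ?_).symm
        have := det_mul_aux (M := P) (N := Matrix.of fun _ _ => (1 : R)) (by simpa using hf)
        simp only [Matrix.of_apply, mul_one] at this
        rw [this, zero_mul]
    _ = ∑ τ : Perm (Fin N), (∑ σ : Perm (Fin N), sign σ * ∏ x, P (σ x) (τ x)) * pairProd τ :=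
        sum_bij (fun f hf => Equiv.ofBijective f (mem_filter.1 hf).2) (fun _ _ => mem_univ _)
          (fun _ _ _ _ h => by injection h)
          (fun τ _ => ⟨τ, mem_filter.2 ⟨mem_univ _, τ.bijective⟩, coe_fn_injective rfl⟩)
          fun _ _ => rfl
    _ = P.det * ∑ σ, pfTerm hN A σ := by
        have hdet (τ : Perm (Fin N)) : ∑ σ : Perm (Fin N), sign σ * ∏ x, P (σ x) (τ x) =
            sign τ * P.det := by rw [← det_permute', det_apply']; rfl
        simp only [hdet, mul_sum, pfTerm, pairProd]
        exact sum_congr rfl fun τ _ => by ring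

end Pfaffian

theorem pf_mul_mul_transpose {N : ℕ} (hN : Even N) {R : Type*} [CommRing R] [IsDomain R]
    [CharZero R] {A : Matrix (Fin N) (Fin N) R} (hA : Aᵀ = -A) (P : Matrix (Fin N) (Fin N) R) :
    pf (P * A * Pᵀ) = P.det * pf A := by
  replace hN := Nat.two_mul_div_two_of_even hN
  have hcard : (#{g | g ∈ pairShearGroup hN} : R) ≠ 0 :=
    Nat.cast_ne_zero.mpr (card_ne_zero.mpr ⟨1, by simp [(pairShearGroup hN).one_mem]⟩)
  have hPAP : (P * A * Pᵀ)ᵀ = -(P * A * Pᵀ) := by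
    simp [Matrix.transpose_mul, hA, Matrix.mul_assoc]
  apply mul_left_cancel₀ hcard
  rw [← sum_pfTerm_eq_card_mul_pf hN hPAP, sum_pfTerm_mul_mul_transpose,
    sum_pfTerm_eq_card_mul_pf hN hA, mul_left_comm]

section Jmat

variable {n k : ℕ}

theorem Jmat_pairEquiv (h : 2 * n = 2 * k) (i i' : Fin n) (a b : Fin 2) :
    Jmat k (pairEquiv h (i, a)) (pairEquiv h (i', b)) =
      if i = i' then !![0, 1; -1, 0] a b else 0 := by
  by_cases hi : i = i'
  · subst hi; fin_cases a <;> fin_cases b <;> simp [Jmat]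
  · have : (i : ℕ) ≠ i' := Fin.val_ne_of_ne hi
    fin_cases a <;> fin_cases b <;> simp [Jmat, hi] <;> (try split_ifs) <;> first | rfl | omega

theorem Jmat_mul_apply {ι : Type*} (X : Matrix (Fin (2 * k)) ι ℂ) (i : Fin k) (a : Fin 2)
    (y : ι) : (Jmat k * X) (pairEquiv rfl (i, a)) y =
      ∑ b, !![0, 1; -1, 0] a b * X (pairEquiv rfl (i, b)) y := by
  rw [Matrix.mul_apply, ← (pairEquiv rfl).sum_comp, Fintype.sum_prod_type]
  simp [Jmat_pairEquiv]

theorem Jmat_mul_Jmat : Jmat k * Jmat k = -1 := by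
  ext x y
  obtain ⟨⟨i, a⟩, rfl⟩ := (pairEquiv (rfl : 2 * k = 2 * k)).surjective x
  obtain ⟨⟨i', b⟩, rfl⟩ := (pairEquiv (rfl : 2 * k = 2 * k)).surjective y
  rw [Jmat_mul_apply]
  by_cases hi : i = i'
  · subst hi; fin_cases a <;> fin_cases b <;> simp [Jmat_pairEquiv, Fin.sum_univ_two]
  · simp [Jmat_pairEquiv, hi]

theorem conjTranspose_Jmat : (Jmat k)ᴴ = -Jmat k := by
  ext x y
  simp only [Matrix.conjTranspose_apply, Matrix.neg_apply, Jmat]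
  split_ifs <;> first | omega | simp

theorem transpose_Jmat : (Jmat k)ᵀ = -Jmat k := by
  ext x y
  simp only [Matrix.transpose_apply, Matrix.neg_apply, Jmat]
  split_ifs <;> first | omega | simp

theorem eq_pairEquiv_of_Jmat_ne_zero (h : 2 * n = 2 * k) {x y : Fin (2 * k)} (hxy : x < y)
    (hJ : Jmat k x y ≠ 0) : ∃ i, x = pairEquiv h (i, 0) ∧ y = pairEquiv h (i, 1) := by
  obtain ⟨⟨i, a⟩, rfl⟩ := (pairEquiv h).surjective x
  obtain ⟨⟨i', b⟩, rfl⟩ := (pairEquiv h).surjective y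
  rw [Jmat_pairEquiv] at hJ
  split_ifs at hJ with hi
  · subst hi
    rw [Fin.lt_def] at hxy
    fin_cases a <;> fin_cases b <;> simp at hJ hxy ⊢
  · exact absurd rfl hJ

theorem pf_Jmat : pf (Jmat k) = 1 := by
  have hN : 2 * (2 * k / 2) = 2 * k := by omega
  rw [pf_eq_sum_pfTerm hN, sum_eq_single_of_mem 1 (one_mem_pfPerms hN)]
  · simp [pfTerm, Jmat_pairEquiv]
  intro σ hσ hσ1
  contrapose! hσ1
  have hσJ (j) : Jmat k (σ (pairEquiv hN (j, 0))) (σ (pairEquiv hN (j, 1))) ≠ 0 := fun h0 =>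
    hσ1 (by rw [pfTerm, prod_eq_zero (mem_univ j) h0, mul_zero])
  rw [mem_pfPerms] at hσ
  choose g hg using fun j => eq_pairEquiv_of_Jmat_ne_zero hN (hσ.1 j) (hσJ j)
  have hg_id : g = id := StrictMono.eq_id fun a b hab => by
    have : σ (pairEquiv hN (a, 0)) < σ (pairEquiv hN (b, 0)) := hσ.2 hab
    rw [(hg a).1, (hg b).1, Fin.lt_def] at this
    simpa using this
  ext x
  obtain ⟨⟨j, b⟩, rfl⟩ := (pairEquiv hN).surjective x
  fin_cases b <;> simp [(hg j).1, (hg j).2, hg_id]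

theorem emb_pairEquiv {m : ℕ} (t : Fin k → Fin m) (i : Fin k) (a : Fin 2) :
    emb t (pairEquiv rfl (i, a)) = pairEquiv rfl (t i, a) := by
  have h : (⟨(2 * i + a) / 2, by omega⟩ : Fin k) = i := by ext; simp; omega
  ext; simp [emb, h, Nat.mod_eq_of_lt a.isLt]

theorem Jmat_mul_blockSub {m : ℕ} (B : Matrix (Fin (2 * m)) (Fin (2 * m)) ℂ)
    (t : Fin k → Fin m) : Jmat k * blockSub B t = (Jmat m * B).submatrix (emb t) (emb t) := by
  ext x y
  obtain ⟨⟨i, a⟩, rfl⟩ := (pairEquiv (rfl : 2 * k = 2 * k)).surjective x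
  simp [Jmat_mul_apply, emb_pairEquiv, blockSub]

end Jmat

section Sqrt

open scoped MatrixOrder

theorem transpose_sqrt_of_transpose_eq {n : Type*} [Fintype n] [DecidableEq n]
    {A U : Matrix n n ℂ} (hA : A.PosSemidef) (hU : Uᴴ * U = 1) (hAU : Aᵀ = U * A * Uᴴ) :
    (CFC.sqrt A)ᵀ = U * CFC.sqrt A * Uᴴ := by
  set C := CFC.sqrt A
  have hC : C.PosSemidef := nonneg_iff_posSemidef.mp (CFC.sqrt_nonneg A)
  have hCC : C * C = A := CFC.sqrt_mul_sqrt_self A (nonneg_iff_posSemidef.mpr hA)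
  have hCT : CFC.sqrt Aᵀ = Cᵀ := CFC.sqrt_unique (by rw [← Matrix.transpose_mul, hCC])
    (nonneg_iff_posSemidef.mpr hC.transpose)
  have hUCU : CFC.sqrt Aᵀ = U * C * Uᴴ := by
    refine CFC.sqrt_unique ?_ (nonneg_iff_posSemidef.mpr (hC.mul_mul_conjTranspose_same U))
    calc U * C * Uᴴ * (U * C * Uᴴ) = U * (C * (Uᴴ * U) * C) * Uᴴ := by
          simp only [Matrix.mul_assoc]
      _ = Aᵀ := by rw [hU, Matrix.mul_one, hCC, hAU]
  rw [← hCT, hUCU]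

theorem pf_nonneg_of_posSemidef_neg_Jmat_mul {k : ℕ} {B : Matrix (Fin (2 * k)) (Fin (2 * k)) ℂ}
    (hB : Bᵀ = -B) (h : (-Jmat k * B).PosSemidef) : 0 ≤ pf B := by
  set A := -Jmat k * B with hA
  set C := CFC.sqrt A
  have hC : C.PosSemidef := nonneg_iff_posSemidef.mp (CFC.sqrt_nonneg A)
  have hJA : Jmat k * A = B := by
    rw [hA, ← Matrix.mul_assoc, Matrix.mul_neg, Jmat_mul_Jmat, neg_neg, Matrix.one_mul]
  have hJJ : (Jmat k)ᴴ * Jmat k = 1 := by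
    rw [conjTranspose_Jmat, Matrix.neg_mul, Jmat_mul_Jmat, neg_neg]
  have hAT : Aᵀ = Jmat k * A * (Jmat k)ᴴ := by
    rw [hJA, conjTranspose_Jmat, Matrix.transpose_mul, hB, transpose_neg, transpose_Jmat]
    simp
  have hCT : Cᵀ = Jmat k * C * (Jmat k)ᴴ := transpose_sqrt_of_transpose_eq h hJJ hAT
  have hCJC : Cᵀ * Jmat k * C = B := by
    calc Cᵀ * Jmat k * C = Jmat k * C * ((Jmat k)ᴴ * Jmat k) * C := by
          simp only [hCT, Matrix.mul_assoc]
      _ = Jmat k * A := by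
          rw [hJJ, Matrix.mul_one, Matrix.mul_assoc, CFC.sqrt_mul_sqrt_self A h.nonneg]
      _ = B := hJA
  have hpf := pf_mul_mul_transpose (even_two_mul k) transpose_Jmat Cᵀ
  rw [transpose_transpose, hCJC, pf_Jmat, mul_one, det_transpose] at hpf
  exact hpf ▸ hC.det_nonneg

end Sqrt

theorem pf_nonneg_of_posSemidef (m : ℕ) (B : Matrix (Fin (2 * m)) (Fin (2 * m)) ℂ)
    (hB : Bᵀ = -B) (h : ((-(Jmat m)) * B).PosSemidef) :
    (∀ S : Finset (Fin m), 0 ≤ pf (blockSub B ⇑(S.orderEmbOfFin rfl))) ∧ 0 ≤ pf B := by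
  refine ⟨fun S => pf_nonneg_of_posSemidef_neg_Jmat_mul ?_ ?_,
    pf_nonneg_of_posSemidef_neg_Jmat_mul hB h⟩
  · rw [blockSub, transpose_submatrix, hB]
    rfl
  · have h' := h.submatrix (emb (S.orderEmbOfFin rfl))
    rw [Matrix.neg_mul] at h' ⊢
    rwa [Jmat_mul_blockSub]
end
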